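/- arXiv:2407.17697 — 2 statements merged into one kernel-verified Lean document; each statement's English description precedes it below -/
import Mathlib

section
/- For c > 2, the Logarithmic Loss is not superior: there exist a probability vector x whose arg max equals the true class and a probability vector q whose arg max differs from the true class such that S_LL(x, i) ≥ S_LL(q, i), i.e., the correct prediction does not receive a strictly better (smaller) score. -/
/-!
With three classes a prediction can be correct while giving the true class less than `1/2`
(e.g. `(2/5, 3/10, 3/10)`), whereas a misclassified prediction can give it anything below
`1/2` (e.g. `(2/5, 3/5)`). Both then receive the same log loss `-log (2/5)`.
-/

section ProbabilityVectors

variable {ι : Type*} [Fintype ι] [DecidableEq ι]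

theorem exists_mem_stdSimplex_isStrictMax_apply_eq {i j k : ι} (hij : i ≠ j) (hik : i ≠ k)
    (hjk : j ≠ k) {t : ℝ} (ht : 1 / 3 < t) (ht1 : t ≤ 1) :
    ∃ x ∈ stdSimplex ℝ ι, (∀ l ≠ i, x l < x i) ∧ x i = t := by
  set x : ι → ℝ := Pi.single i t + Pi.single j ((1 - t) / 2) + Pi.single k ((1 - t) / 2)
  have hxi : x i = t := by simp [x, hij, hik]
  refine ⟨x, ⟨fun l => ?_, ?_⟩, fun l hl => ?_, hxi⟩
  · simp only [x, Pi.add_apply, Pi.single_apply]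
    split_ifs <;> linarith
  · simp only [x, Finset.sum_add_distrib, Pi.add_apply, Finset.sum_pi_single', Finset.mem_univ,
      if_true]
    ring
  · rw [hxi]
    simp only [x, Pi.add_apply, Pi.single_apply, if_neg hl]
    split_ifs <;> simp_all <;> linarith

theorem exists_mem_stdSimplex_apply_lt_apply_eq {i j : ι} (hij : i ≠ j) {t : ℝ} (ht : 0 ≤ t)
    (ht2 : t < 1 / 2) :
    ∃ q ∈ stdSimplex ℝ ι, q i < q j ∧ q i = t := by
  set q : ι → ℝ := Pi.single i t + Pi.single j (1 - t)
  have hqi : q i = t := by simp [q, hij]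
  have hqj : q j = 1 - t := by simp [q, hij.symm]
  refine ⟨q, ⟨fun l => ?_, ?_⟩, by linarith, hqi⟩
  · simp only [q, Pi.add_apply, Pi.single_apply]
    split_ifs <;> linarith
  · simp only [q, Finset.sum_add_distrib, Pi.add_apply, Finset.sum_pi_single', Finset.mem_univ,
      if_true]
    ring

end ProbabilityVectors

/-- For `c > 2`, the Logarithmic Loss is not superior: there exist a true class `i`,
a probability vector `x` correctly classified (its arg max is `i`) and a probability
vector `q` misclassified (its arg max is not `i`) such that the correct prediction
does not receive a strictly smaller score: `-log (x i) ≥ -log (q i)`. -/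
theorem logloss_not_superior (c : ℕ) (hc : 2 < c) :
    ∃ (i : Fin c) (x q : Fin c → ℝ),
      (∀ k, 0 ≤ x k) ∧ (∑ k, x k = 1) ∧
      (∀ k, 0 ≤ q k) ∧ (∑ k, q k = 1) ∧
      (∀ k, k ≠ i → x k < x i) ∧
      (∃ k, q i < q k) ∧
      -Real.log (x i) ≥ -Real.log (q i) := by
  obtain ⟨i, j, k, hij, hik, hjk⟩ := Fintype.two_lt_card_iff.mp ((Fintype.card_fin c).symm ▸ hc)
  obtain ⟨x, ⟨hx0, hx1⟩, hx_max, hxi⟩ :=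
    exists_mem_stdSimplex_isStrictMax_apply_eq hij hik hjk (t := 2 / 5) (by norm_num) (by norm_num)
  obtain ⟨q, ⟨hq0, hq1⟩, hq_lt, hqi⟩ :=
    exists_mem_stdSimplex_apply_lt_apply_eq hij (t := 2 / 5) (by norm_num) (by norm_num)
  exact ⟨i, x, q, hx0, hx1, hq0, hq1, hx_max, ⟨j, hq_lt⟩, by rw [hxi, hqi]⟩
end

section
/- For c > 2, the Brier Score is not superior: there exist a probability vector x with arg max x equal to the true class i and a probability vector q with arg max q ≠ i such that S_BS(x, i) ≥ S_BS(q, i). In particular, with x and q sharing the same true-class probability α, q can have larger Brier Score dominated by x or vice versa; concretely, for c = 3, i = 2, x = (0.33, 0.34, 0.33) and q = (0.51, 0.49, 0) satisfy S_BS(x, 2) > S_BS(q, 2). -/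
/-!
A barely correct prediction such as `(0.33, 0.34, 0.33)` pays almost the full penalty
`(1 - 0.34)²` on the true class, whereas a wrong prediction such as `(0.51, 0.49, 0)` that gives
the true class nearly half of the mass pays much less there, more than offsetting its larger
penalty on the single competing class. Extending a prediction by zero to further classes does
not change its Brier score, so this three-class example works for every `c > 2`.
-/

open Finset Function

def brierScore {ι : Type*} [Fintype ι] [DecidableEq ι] (p : ι → ℝ) (i : ι) : ℝ :=
  ∑ k, (p k - if k = i then 1 else 0) ^ 2

section ExtendByZero

variable {ι κ M : Type*} {e : ι → κ}

lemma Fintype.sum_extend_zero [Fintype ι] [Fintype κ] [AddCommMonoid M] (he : Injective e)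
    (f : ι → M) : ∑ k, extend e f 0 k = ∑ j, f j := by
  calc ∑ k, extend e f 0 k = ∑ k ∈ univ.map ⟨e, he⟩, extend e f 0 k := by
        refine (Finset.sum_subset (subset_univ _) fun k _ hk => ?_).symm
        exact extend_apply' _ _ _ fun ⟨j, hj⟩ => hk (mem_map.2 ⟨j, mem_univ j, hj⟩)
    _ = ∑ j, f j := by
        rw [sum_map]
        exact Finset.sum_congr rfl fun j _ => he.extend_apply f 0 j

lemma extend_zero_nonneg [Zero M] [Preorder M] {p : ι → M} (hp : ∀ j, 0 ≤ p j) (k : κ) :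
    0 ≤ extend e p 0 k := by
  classical
  rw [extend_def]
  split_ifs
  exacts [hp _, le_rfl]

lemma extend_zero_lt_apply [Zero M] [Preorder M] {p : ι → M} (he : Injective e) {i : ι}
    (hpos : 0 < p i) (hmax : ∀ j, j ≠ i → p j < p i) (k : κ) (hk : k ≠ e i) :
    extend e p 0 k < extend e p 0 (e i) := by
  rw [he.extend_apply]
  by_cases hke : ∃ j, e j = k
  · obtain ⟨j, rfl⟩ := hke
    rw [he.extend_apply]
    exact hmax j fun hj => hk (hj ▸ rfl)
  · rw [extend_apply' _ _ _ hke]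
    exact hpos

variable [Fintype ι] [Fintype κ] [DecidableEq ι] [DecidableEq κ]

lemma brierScore_extend_zero (he : Injective e) (p : ι → ℝ) (i : ι) :
    brierScore (extend e p 0) (e i) = brierScore p i := by
  have hterm : ∀ k, (extend e p 0 k - if k = e i then 1 else 0) ^ 2 =
      extend e (fun j => (p j - if j = i then 1 else 0) ^ 2) 0 k := by
    intro k
    by_cases hk : ∃ j, e j = k
    · obtain ⟨j, rfl⟩ := hk
      simp only [he.extend_apply, he.eq_iff]
    · have hki : k ≠ e i := fun h => hk ⟨i, h.symm⟩
      simp [extend_apply' _ _ _ hk, hki]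
  simp only [brierScore, hterm, Fintype.sum_extend_zero he]

end ExtendByZero

lemma brierScore_misclassified_lt_classified :
    brierScore ![0.51, 0.49, 0] (1 : Fin 3) < brierScore ![0.33, 0.34, 0.33] 1 := by
  simp [brierScore, Fin.sum_univ_three]
  norm_num

/-- For `c > 2`, the Brier Score is not superior: there exist a correctly classified
probability vector `x` and a misclassified probability vector `q` with
`S_BS(x, i) ≥ S_BS(q, i)`.  Concretely, for `c = 3`, true class `2`,
`x = (0.33, 0.34, 0.33)` and `q = (0.51, 0.49, 0)` satisfy `S_BS(x, 2) > S_BS(q, 2)`. -/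
theorem brier_not_superior (c : ℕ) (hc : 2 < c) :
    (∃ (i : Fin c) (x q : Fin c → ℝ),
      (∀ k, 0 ≤ x k) ∧ (∑ k, x k = 1) ∧
      (∀ k, 0 ≤ q k) ∧ (∑ k, q k = 1) ∧
      (∀ k, k ≠ i → x k < x i) ∧
      (∃ k, q i < q k) ∧
      ∑ k, (x k - (if k = i then (1 : ℝ) else 0)) ^ 2 ≥
        ∑ k, (q k - (if k = i then (1 : ℝ) else 0)) ^ 2) ∧
    (∑ k : Fin 3, ((![0.33, 0.34, 0.33] : Fin 3 → ℝ) k - (![0, 1, 0] : Fin 3 → ℝ) k) ^ 2 >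
      ∑ k : Fin 3, ((![0.51, 0.49, 0] : Fin 3 → ℝ) k - (![0, 1, 0] : Fin 3 → ℝ) k) ^ 2) := by
  have hone_hot : (![0, 1, 0] : Fin 3 → ℝ) = fun k => if k = 1 then 1 else 0 := by
    ext k; fin_cases k <;> rfl
  -- `2 < c` unfolds to `3 ≤ c`, which is what `Fin.castLE` asks for.
  have he : Injective (Fin.castLE hc) := Fin.castLE_injective hc
  refine ⟨⟨Fin.castLE hc 1, extend (Fin.castLE hc) ![0.33, 0.34, 0.33] 0,
    extend (Fin.castLE hc) ![0.51, 0.49, 0] 0, extend_zero_nonneg ?_, ?_, extend_zero_nonneg ?_, ?_,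
    extend_zero_lt_apply he ?_ ?_, ⟨Fin.castLE hc 0, ?_⟩, ?_⟩, ?_⟩
  · intro j; fin_cases j <;> norm_num
  · simp [Fintype.sum_extend_zero he, Fin.sum_univ_three]; norm_num
  · intro j; fin_cases j <;> norm_num
  · simp [Fintype.sum_extend_zero he, Fin.sum_univ_three]; norm_num
  · norm_num
  · intro j hj; fin_cases j <;> simp at hj ⊢ <;> norm_num
  · rw [he.extend_apply, he.extend_apply]; norm_num
  · exact (brierScore_extend_zero he _ 1).trans_le
      (brierScore_misclassified_lt_classified.le.trans (brierScore_extend_zero he _ 1).ge)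
  · rw [hone_hot]
    exact brierScore_misclassified_lt_classified
end
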